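/- arXiv:math/0512565 — 4 statements merged into one kernel-verified Lean document; each statement's English description precedes it below -/
import Mathlib

section
/- Let P : (0,1] → (0,1] be differentiable with P(1) = 1, P(s) > 0, satisfying s^{1+k} P'(s) = m·(P(s))^{1+k} on (0,1) for some constant m > 1 and integer k > 0. Then P(s) = s/(m - (m-1)s^k)^{1/k} for all s ∈ (0,1]. -/
open Set

private lemma harris_G_deriv (j : ℕ) (m : ℝ)
    (P P' : ℝ → ℝ)
    (hmem : ∀ s ∈ Set.Ioc (0:ℝ) 1, P s ∈ Set.Ioc (0:ℝ) 1)
    (hderiv : ∀ s ∈ Set.Ioc (0:ℝ) 1, HasDerivAt P (P' s) s)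
    (hode : ∀ s ∈ Set.Ioo (0:ℝ) 1, s ^ (1 + (j+1)) * P' s = m * (P s) ^ (1 + (j+1)))
    (x : ℝ) (hx : x ∈ Set.Ioo (0:ℝ) 1) :
    HasDerivAt (fun s => ((P s) ^ (j+1))⁻¹ - m * (s ^ (j+1))⁻¹) 0 x := by
  have hx' : x ∈ Set.Ioc (0:ℝ) 1 := ⟨hx.1, hx.2.le⟩
  have hPx : 0 < P x := (hmem x hx').1
  have hxpos : 0 < x := hx.1
  have hPne : P x ≠ 0 := hPx.ne'
  have hxne : x ≠ 0 := hxpos.ne'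
  have h1 : HasDerivAt (fun s => ((P s) ^ (j+1))⁻¹)
      (-((↑(j+1) : ℝ) * P x ^ (j+1-1) * P' x) / (P x ^ (j+1)) ^ 2) x :=
    ((hderiv x hx').pow (j+1)).inv (pow_ne_zero _ hPne)
  have h2 : HasDerivAt (fun s : ℝ => m * (s ^ (j+1))⁻¹)
      (m * (-((↑(j+1) : ℝ) * x ^ (j+1-1)) / (x ^ (j+1)) ^ 2)) x := by
    have := ((hasDerivAt_pow (j+1) x).inv (by positivity)).const_mul m
    simpa using this
  have hP' : P' x = m * (P x) ^ (1 + (j+1)) / x ^ (1 + (j+1)) := by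
    have h := hode x hx
    have hxp : (x:ℝ) ^ (1 + (j+1)) ≠ 0 := by positivity
    field_simp at h ⊢
    linarith [h]
  have := h1.sub h2
  refine this.congr_deriv ?_
  rw [hP']
  simp only [Nat.add_sub_cancel]
  field_simp
  ring
/-- Converse ODE characterization of the Harris p.g.f.: if `P : (0,1] → (0,1]`
is differentiable with `P(1) = 1` and satisfies
`s^{1+k} P'(s) = m (P(s))^{1+k}`, then `P(s) = s/(m - (m-1)s^k)^{1/k}`. -/
theorem ode_characterizes_harris_pgf
    (k : ℕ) (hk : 0 < k) (m : ℝ) (hm : 1 < m)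
    (P P' : ℝ → ℝ) (hP1 : P 1 = 1)
    (hmem : ∀ s ∈ Set.Ioc (0:ℝ) 1, P s ∈ Set.Ioc (0:ℝ) 1)
    (hderiv : ∀ s ∈ Set.Ioc (0:ℝ) 1, HasDerivAt P (P' s) s)
    (hode : ∀ s ∈ Set.Ioo (0:ℝ) 1, s ^ (1 + k) * P' s = m * (P s) ^ (1 + k)) :
    ∀ s ∈ Set.Ioc (0:ℝ) 1, P s = s / (m - (m - 1) * s ^ k) ^ ((1 : ℝ) / k) := by
  obtain ⟨j, rfl⟩ : ∃ j, k = j + 1 := ⟨k - 1, (Nat.succ_pred_eq_of_pos hk).symm⟩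
  intro s hs
  set G : ℝ → ℝ := fun s => ((P s) ^ (j+1))⁻¹ - m * (s ^ (j+1))⁻¹ with hGdef
  have hGs : G s = 1 - m := by
    rcases eq_or_lt_of_le hs.2 with h1 | hlt
    · simp [hGdef, h1, hP1]
    · have hsub : Icc s 1 ⊆ Ioc (0:ℝ) 1 := fun y hy => ⟨lt_of_lt_of_le hs.1 hy.1, hy.2⟩
      have hcont : ContinuousOn G (Icc s 1) := by
        intro y hy
        have hy' := hsub hy
        have hPy : (P y) ^ (j+1) ≠ 0 := by
          have := (hmem y hy').1; positivity
        have hyy : (y:ℝ) ^ (j+1) ≠ 0 := by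
          have := hy'.1; positivity
        exact (((((hderiv y hy').continuousAt.pow (j+1)).inv₀ hPy).sub
          ((((continuousAt_id (x := y)).pow (j+1)).inv₀ hyy).const_smul m))).continuousWithinAt
      have hder : ∀ y ∈ Ico s 1, HasDerivWithinAt G 0 (Ici y) y := fun y hy =>
        (harris_G_deriv j m P P' hmem hderiv hode y
          ⟨lt_of_lt_of_le hs.1 hy.1, hy.2⟩).hasDerivWithinAt
      have h := constant_of_has_deriv_right_zero hcont hder 1 ⟨hs.2, le_refl 1⟩
      have hG1 : G 1 = 1 - m := by simp [hGdef, hP1]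
      rw [← h, hG1]
  have hPs : 0 < P s := (hmem s hs).1
  have hspos : 0 < s := hs.1
  have hD : (0:ℝ) < m - (m - 1) * s ^ (j+1) := by
    nlinarith [pow_le_one₀ hspos.le hs.2 (n := j+1), pow_pos hspos (j+1)]
  have hPkne : (P s) ^ (j+1) ≠ 0 := by positivity
  have hskne : (s:ℝ) ^ (j+1) ≠ 0 := by positivity
  have hGs' : ((P s) ^ (j+1))⁻¹ - m * (s ^ (j+1))⁻¹ = 1 - m := hGs
  have hPk : (P s) ^ (j+1) = s ^ (j+1) / (m - (m-1) * s ^ (j+1)) := by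
    field_simp at hGs'
    rw [eq_div_iff hD.ne']
    nlinarith [hGs']
  set D : ℝ := m - (m - 1) * s ^ (j+1) with hDdef
  have hkR : ((j+1 : ℕ) : ℝ) ≠ 0 := by positivity
  have hRHS : (s / D ^ ((1:ℝ)/(j+1:ℕ))) ^ (j+1) = s ^ (j+1) / D := by
    rw [div_pow, ← Real.rpow_natCast (D ^ ((1:ℝ)/(j+1:ℕ))) (j+1), ← Real.rpow_mul hD.le,
      one_div, inv_mul_cancel₀ hkR, Real.rpow_one]
  have hRpos : (0:ℝ) ≤ s / D ^ ((1:ℝ)/(j+1:ℕ)) := by positivity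
  have heq : (P s) ^ (j+1) = (s / D ^ ((1:ℝ)/(j+1:ℕ))) ^ (j+1) := by
    rw [hPk, hRHS]
  have hfin := (pow_left_strictMonoOn₀ (n := j+1) (by omega : j+1 ≠ 0)).injOn
    hPs.le hRpos heq
  exact_mod_cast hfin
end

section
/- For the Harris p.g.f. P(s) = s/(m - (m-1)s^k)^{1/k}, with m > 1 and integer k > 0, the identity k = [s·P(s)·P''(s) - s·(P'(s))² + P(s)·P'(s)] / [P'(s)·(s·P'(s) - P(s))] holds at every s ∈ (0,1) where the denominator is nonzero. -/
set_option maxHeartbeats 1000000 in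
/-- For the Harris p.g.f. `P(s) = s/(m - (m-1)s^k)^{1/k}`, the parameter `k`
satisfies `k = (s P P'' - s (P')² + P P')/(P'(s P' - P))` wherever the
denominator is nonzero on `(0,1)`. -/
theorem harris_pgf_k_formula
    (k : ℕ) (hk : 0 < k) (m : ℝ) (hm : 1 < m) :
    ∀ s ∈ Set.Ioo (0:ℝ) 1,
      let P : ℝ → ℝ := fun s => s / (m - (m - 1) * s ^ k) ^ ((1 : ℝ) / k)
      deriv P s * (s * deriv P s - P s) ≠ 0 →
      (k : ℝ) = (s * P s * deriv (deriv P) s - s * (deriv P s) ^ 2 + P s * deriv P s)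
        / (deriv P s * (s * deriv P s - P s)) := by
  obtain ⟨j, rfl⟩ : ∃ j, k = j + 1 := ⟨k - 1, by omega⟩
  intro s hs P hD
  set c : ℝ := (1 : ℝ) / ((j+1 : ℕ) : ℝ) with hc_def
  have hjk : ((j+1 : ℕ) : ℝ) ≠ 0 := by positivity
  have hc1 : ((j+1 : ℕ) : ℝ) * c = 1 := by
    rw [hc_def]; field_simp
  set Q : ℝ → ℝ := fun x => m - (m - 1) * x ^ (j+1) with hQ_def
  have hQpos : ∀ x ∈ Set.Ioo (0:ℝ) 1, 0 < Q x := by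
    intro x hx
    have h1 : x ^ (j+1) < 1 := pow_lt_one₀ hx.1.le hx.2 (Nat.succ_ne_zero j)
    have h2 : 0 < x ^ (j+1) := pow_pos hx.1 _
    simp only [hQ_def]
    nlinarith
  have hQder : ∀ x : ℝ, HasDerivAt Q (-((m-1) * (((j+1:ℕ):ℝ) * x ^ j))) x := by
    intro x
    have h := ((hasDerivAt_pow (j+1) x).const_mul (m-1)).const_sub m
    simpa using h
  -- first derivative
  have hg : ∀ x ∈ Set.Ioo (0:ℝ) 1,
      HasDerivAt P (m * Q x ^ (-(1+c))) x := by
    intro x hx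
    have hQx := hQpos x hx
    have hv : HasDerivAt (fun y => Q y ^ c)
        ((-((m-1) * (((j+1:ℕ):ℝ) * x ^ j))) * c * Q x ^ (c - 1)) x :=
      (hQder x).rpow_const (Or.inl hQx.ne')
    have hvx : Q x ^ c ≠ 0 := (Real.rpow_pos_of_pos hQx c).ne'
    have h := (hasDerivAt_id x).div hv hvx
    have hP : P = fun y => y / Q y ^ c := rfl
    rw [hP]
    convert h using 1
    case e'_4 => rfl
    case e'_5 => rfl
    case e'_8 => rfl
    have e1 : Q x ^ c = Q x ^ (c - 1) * Q x := by
      rw [← Real.rpow_add_one hQx.ne' (c-1)]; ring_nf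
    have e2 : m * Q x ^ (-(1+c)) * ((Q x ^ c) ^ 2) = m * Q x ^ (c - 1) := by
      rw [sq, ← Real.rpow_add hQx, mul_assoc, ← Real.rpow_add hQx]
      congr 1; ring_nf
    have h5 : (-((m-1) * (((j+1:ℕ):ℝ) * x ^ j))) * c = -((m-1) * x ^ j) := by
      linear_combination (-(m-1) * x ^ j) * hc1
    rw [eq_div_iff (pow_ne_zero 2 hvx), e2, h5, e1]
    simp only [hQ_def, id_eq]
    ring
  -- deriv P agrees with g near s
  set g : ℝ → ℝ := fun x => m * Q x ^ (-(1+c)) with hg_def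
  have hEv : deriv P =ᶠ[nhds s] g := by
    filter_upwards [isOpen_Ioo.mem_nhds hs] with x hx
    exact (hg x hx).deriv
  have hdP : deriv P s = m * Q s ^ (-(1+c)) := (hg s hs).deriv
  -- second derivative
  have hgder : HasDerivAt g
      (m * ((-((m-1) * (((j+1:ℕ):ℝ) * s ^ j))) * (-(1+c)) * Q s ^ (-(1+c) - 1))) s :=
    ((hQder s).rpow_const (Or.inl (hQpos s hs).ne')).const_mul m
  have hddP : deriv (deriv P) s
      = m * ((-((m-1) * (((j+1:ℕ):ℝ) * s ^ j))) * (-(1+c)) * Q s ^ (-(1+c) - 1)) := by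
    rw [hEv.deriv_eq]; exact hgder.deriv
  have hq := hQpos s hs
  have hB : (0:ℝ) < Q s ^ c := Real.rpow_pos_of_pos hq c
  have e3 : Q s ^ (-(1+c)) = 1 / (Q s ^ c * Q s) := by
    rw [eq_div_iff (by positivity), ← Real.rpow_add_one hq.ne' c,
      ← Real.rpow_add hq, show -(1+c) + (c+1) = 0 by ring, Real.rpow_zero]
  have e4 : Q s ^ (-(1+c) - 1) = 1 / (Q s ^ c * Q s ^ (2:ℕ)) := by
    rw [eq_div_iff (by positivity), ← Real.rpow_natCast (Q s) 2,
      ← Real.rpow_add hq, ← Real.rpow_add hq,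
      show -(1+c) - 1 + (c + ((2:ℕ):ℝ)) = 0 by push_cast; ring, Real.rpow_zero]
  have hc2 : (1 + c) * ((j+1:ℕ):ℝ) = ((j+1:ℕ):ℝ) + 1 := by
    linear_combination hc1
  have h6 : (-((m-1) * (((j+1:ℕ):ℝ) * s ^ j))) * (-(1+c))
      = (m-1) * s ^ j * (((j+1:ℕ):ℝ) + 1) := by
    linear_combination ((m-1) * s ^ j) * hc2
  have hPs : P s = s / Q s ^ c := rfl
  rw [eq_div_iff hD, hPs, hdP, hddP, e3, e4, h6]
  set B := Q s ^ c with hB_def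
  have hBne : B ≠ 0 := hB.ne'
  have hqne : Q s ≠ 0 := hq.ne'
  simp only [hQ_def] at hqne ⊢
  push_cast

  field_simp
  ring
end

section
/- If X₁,...,X_k are i.i.d. random variables each with p.g.f. P(s) = s/(m - (m-1)s^k)^{1/k} (Harris H₁(m,k,1/k)), then Y = X₁ + ... + X_k has p.g.f. p s^k/(1 - q s^k) with p = 1/m, q = 1-p; i.e., Y ~ Geo_k(p,k). Conversely, if i.i.d. nonnegative integer-valued X₁,...,X_k have sum distributed Geo_k(p,k), then each Xᵢ is Harris H₁(1/p, k, 1/k). -/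
open ProbabilityTheory MeasureTheory

/-- The Harris `H₁(m,k,1/k)` p.m.f. at `1 + n k` (as a function of `n`):
`C(1/k+n-1, n) (1/m)^{1/k} (1-1/m)^n`. -/
noncomputable def harrisPMF (m : ℝ) (k n : ℕ) : ℝ :=
  ((∏ j ∈ Finset.range n, ((1 : ℝ) / k + j)) / n.factorial)
    * (1 / m) ^ ((1 : ℝ) / k) * (1 - 1 / m) ^ n

/-- The `Geo_k(p,k)` p.m.f. at `n k`: `q^{n-1} p` for `n ≥ 1`, `0` at `n = 0`. -/
noncomputable def geoKPMF (p : ℝ) (n : ℕ) : ℝ :=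
  if n = 0 then 0 else (1 - p) ^ (n - 1) * p


open Finset

namespace HarrisAux

noncomputable def c (α : ℝ) (n : ℕ) : ℝ := (∏ j ∈ Finset.range n, (α + j)) / n.factorial

lemma c_zero (α : ℝ) : c α 0 = 1 := by simp [c]

lemma c_succ (α : ℝ) (n : ℕ) : c α (n + 1) = c α n * (α + n) / (n + 1) := by
  rw [c, c, Finset.prod_range_succ, Nat.factorial_succ]
  push_cast
  rw [div_mul_eq_mul_div, div_div, mul_comm ((n:ℝ)+1)]

lemma c_succ_mul (α : ℝ) (n : ℕ) : ((n : ℝ) + 1) * c α (n + 1) = c α n * (α + n) := by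
  rw [c_succ]
  have : ((n : ℝ) + 1) ≠ 0 := by positivity
  field_simp

lemma c_nonneg {α : ℝ} (hα : 0 ≤ α) (n : ℕ) : 0 ≤ c α n := by
  apply div_nonneg _ (by positivity)
  exact Finset.prod_nonneg fun j _ => by positivity

lemma c_one (n : ℕ) : c 1 n = 1 := by
  induction n with
  | zero => simp [c_zero]
  | succ n ih =>
    rw [c_succ, ih]
    have : ((n : ℝ) + 1) ≠ 0 := by positivity
    field_simp
    ring

lemma c_le_one {α : ℝ} (h0 : 0 ≤ α) (h1 : α ≤ 1) (n : ℕ) : c α n ≤ 1 := by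
  induction n with
  | zero => simp [c_zero]
  | succ n ih =>
    rw [c_succ]
    rw [div_le_one (by positivity)]
    calc c α n * (α + n) ≤ 1 * (1 + n) := by
          apply mul_le_mul ih (by linarith) (by positivity) (by norm_num)
      _ = (n : ℝ) + 1 := by ring

lemma vand2 (a b : ℝ) (n : ℕ) :
    ∑ ij ∈ Finset.HasAntidiagonal.antidiagonal n, c a ij.1 * c b ij.2 = c (a + b) n := by
  induction n with
  | zero => simp [c_zero]
  | succ n ih =>
    have hne : ((n : ℝ) + 1) ≠ 0 := by positivity
    apply mul_left_cancel₀ hne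
    have key : ((n : ℝ) + 1) * ∑ ij ∈ Finset.HasAntidiagonal.antidiagonal (n+1), c a ij.1 * c b ij.2
        = (a + b + n) * ∑ ij ∈ Finset.HasAntidiagonal.antidiagonal n, c a ij.1 * c b ij.2 := by
      have expand : ((n : ℝ) + 1) * ∑ ij ∈ Finset.HasAntidiagonal.antidiagonal (n+1), c a ij.1 * c b ij.2
          = (∑ ij ∈ Finset.HasAntidiagonal.antidiagonal (n+1), (ij.1 : ℝ) * (c a ij.1 * c b ij.2))
            + (∑ ij ∈ Finset.HasAntidiagonal.antidiagonal (n+1), (ij.2 : ℝ) * (c a ij.1 * c b ij.2)) := by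
        rw [Finset.mul_sum, ← Finset.sum_add_distrib]
        apply Finset.sum_congr rfl
        intro ij hij
        have : ij.1 + ij.2 = n + 1 := Finset.HasAntidiagonal.mem_antidiagonal.mp hij
        have h3 : ((ij.1 : ℝ) + ij.2) = (n : ℝ) + 1 := by exact_mod_cast congrArg (Nat.cast (R := ℝ)) this
        rw [← h3]; ring
      have first : (∑ ij ∈ Finset.HasAntidiagonal.antidiagonal (n+1), (ij.1 : ℝ) * (c a ij.1 * c b ij.2))
          = a * (∑ ij ∈ Finset.HasAntidiagonal.antidiagonal n, c a ij.1 * c b ij.2)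
            + ∑ ij ∈ Finset.HasAntidiagonal.antidiagonal n, (ij.1 : ℝ) * (c a ij.1 * c b ij.2) := by
        rw [Finset.Nat.sum_antidiagonal_succ]
        simp only [Nat.cast_zero, zero_mul, zero_add]
        rw [Finset.mul_sum, ← Finset.sum_add_distrib]
        apply Finset.sum_congr rfl
        intro ij _
        have h2 : ((ij.1 : ℝ) + 1) * c a (ij.1 + 1) = c a ij.1 * (a + ij.1) := c_succ_mul a ij.1
        push_cast
        linear_combination (c b ij.2) * h2
      have second : (∑ ij ∈ Finset.HasAntidiagonal.antidiagonal (n+1), (ij.2 : ℝ) * (c a ij.1 * c b ij.2))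
          = b * (∑ ij ∈ Finset.HasAntidiagonal.antidiagonal n, c a ij.1 * c b ij.2)
            + ∑ ij ∈ Finset.HasAntidiagonal.antidiagonal n, (ij.2 : ℝ) * (c a ij.1 * c b ij.2) := by
        rw [Finset.Nat.sum_antidiagonal_succ']
        simp only [Nat.cast_zero, zero_mul, zero_add]
        rw [Finset.mul_sum, ← Finset.sum_add_distrib]
        apply Finset.sum_congr rfl
        intro ij _
        have h2 : ((ij.2 : ℝ) + 1) * c b (ij.2 + 1) = c b ij.2 * (b + ij.2) := c_succ_mul b ij.2
        push_cast
        linear_combination (c a ij.1) * h2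
      have third : (∑ ij ∈ Finset.HasAntidiagonal.antidiagonal n, (ij.1 : ℝ) * (c a ij.1 * c b ij.2))
          + (∑ ij ∈ Finset.HasAntidiagonal.antidiagonal n, (ij.2 : ℝ) * (c a ij.1 * c b ij.2))
          = (n : ℝ) * ∑ ij ∈ Finset.HasAntidiagonal.antidiagonal n, c a ij.1 * c b ij.2 := by
        rw [Finset.mul_sum, ← Finset.sum_add_distrib]
        apply Finset.sum_congr rfl
        intro ij hij
        have : ij.1 + ij.2 = n := Finset.HasAntidiagonal.mem_antidiagonal.mp hij
        have h3 : ((ij.1 : ℝ) + ij.2) = (n : ℝ) := by exact_mod_cast congrArg (Nat.cast (R := ℝ)) this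
        rw [← h3]; ring
      rw [expand, first, second]
      linarith [third]
    rw [key, ih]
    linear_combination -1 * c_succ_mul (a+b) n


lemma sum_adt_succ {M : Type*} [AddCommMonoid M] (k n : ℕ) (f : (Fin (k+1) → ℕ) → M) :
    ∑ x ∈ Finset.Nat.antidiagonalTuple (k+1) n, f x
      = ∑ ij ∈ Finset.HasAntidiagonal.antidiagonal n,
          ∑ x ∈ Finset.Nat.antidiagonalTuple k ij.2, f (Fin.cons ij.1 x) := by
  rw [← Finset.sum_sigma (Finset.HasAntidiagonal.antidiagonal n)
      (fun ij => Finset.Nat.antidiagonalTuple k ij.2)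
      (fun p => f (Fin.cons p.1.1 p.2))]
  refine Finset.sum_nbij'
    (i := fun x : Fin (k+1) → ℕ =>
      (⟨(x 0, ∑ i : Fin k, x (Fin.succ i)), Fin.tail x⟩ : (_ : ℕ × ℕ) × (Fin k → ℕ)))
    (j := fun p : (_ : ℕ × ℕ) × (Fin k → ℕ) => Fin.cons p.1.1 p.2)
    ?_ ?_ ?_ ?_ ?_
  · intro x hx
    rw [Finset.Nat.mem_antidiagonalTuple] at hx
    rw [Finset.mem_sigma]
    refine ⟨?_, ?_⟩
    · rw [Finset.HasAntidiagonal.mem_antidiagonal]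
      rw [← hx, Fin.sum_univ_succ]
    · rw [Finset.Nat.mem_antidiagonalTuple]
      rfl
  · intro p hp
    rw [Finset.mem_sigma] at hp
    rw [Finset.Nat.mem_antidiagonalTuple, Fin.sum_cons,
      Finset.Nat.mem_antidiagonalTuple.mp hp.2]
    exact Finset.HasAntidiagonal.mem_antidiagonal.mp hp.1
  · intro x _
    exact Fin.cons_self_tail x
  · intro p hp
    rw [Finset.mem_sigma] at hp
    have h2 : ∑ i : Fin k, (Fin.cons p.1.1 p.2 : Fin (k+1) → ℕ) i.succ = p.1.2 := by
      simp only [Fin.cons_succ]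
      exact Finset.Nat.mem_antidiagonalTuple.mp hp.2
    ext1
    · have h3 := Finset.Nat.mem_antidiagonalTuple.mp hp.2
      simp only [Fin.cons_succ] at h2
      simp [h3]
    · simp [Fin.tail_cons]
  · intro x hx
    rw [Fin.cons_self_tail x]

lemma c_zero_left (n : ℕ) : c 0 (n + 1) = 0 := by
  rw [c]
  rw [Finset.prod_eq_zero (Finset.mem_range.mpr (Nat.succ_pos n)) (by norm_num)]
  simp

lemma vandk (k : ℕ) (α : ℝ) (n : ℕ) :
    ∑ x ∈ Finset.Nat.antidiagonalTuple k n, ∏ i, c α (x i) = c ((k : ℝ) * α) n := by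
  induction k generalizing n with
  | zero =>
    cases n with
    | zero => simp [c_zero]
    | succ n => simp [c_zero_left]
  | succ k ih =>
    rw [sum_adt_succ]
    have : ∀ ij ∈ Finset.HasAntidiagonal.antidiagonal n,
        (∑ x ∈ Finset.Nat.antidiagonalTuple k ij.2, ∏ i, c α ((Fin.cons ij.1 x : Fin (k+1) → ℕ) i))
          = c α ij.1 * c ((k : ℝ) * α) ij.2 := by
      intro ij _
      rw [← ih ij.2, Finset.mul_sum]
      apply Finset.sum_congr rfl
      intro x _
      rw [Fin.prod_univ_succ]
      simp [Fin.cons_succ]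
    rw [Finset.sum_congr rfl this, vand2]
    congr 1
    push_cast
    ring

end HarrisAux
namespace HarrisAux2
open HarrisAux

lemma harrisPMF_eq (m : ℝ) (k n : ℕ) :
    harrisPMF m k n = c (1 / k) n * (1 / m) ^ ((1 : ℝ) / k) * (1 - 1 / m) ^ n := rfl

lemma harrisPMF_nonneg {m : ℝ} (hm : 1 ≤ m) (k n : ℕ) : 0 ≤ harrisPMF m k n := by
  have h1 : (0:ℝ) < m := by linarith
  have h2 : 1 / m ≤ 1 := by rw [div_le_one h1]; linarith
  rw [harrisPMF_eq]
  have hc := c_nonneg (α := 1 / (k:ℝ)) (by positivity) n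
  have hr : (0:ℝ) ≤ (1/m) ^ ((1:ℝ)/k) := by positivity
  have hq : (0:ℝ) ≤ (1 - 1/m) ^ n := by
    apply pow_nonneg; linarith
  positivity

noncomputable def hseq (m : ℝ) (k : ℕ) (j : ℕ) : ℝ :=
  if 1 ≤ j ∧ k ∣ (j - 1) then harrisPMF m k ((j - 1) / k) else 0

noncomputable def gseq (p : ℝ) (k : ℕ) (j : ℕ) : ℝ :=
  if k ∣ j then geoKPMF p (j / k) else 0

lemma good_pair {k : ℕ} (a : ℕ) : 1 ≤ 1 + a * k ∧ k ∣ (1 + a * k - 1) :=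
  ⟨by omega, ⟨a, by have := Nat.mul_comm k a; omega⟩⟩

lemma hseq_at {k : ℕ} (hk : 0 < k) (m : ℝ) (n : ℕ) :
    hseq m k (1 + n * k) = harrisPMF m k n := by
  rw [hseq, if_pos (good_pair n)]
  congr 1
  simp [Nat.mul_div_cancel _ hk]

lemma hseq_nonneg {m : ℝ} (hm : 1 ≤ m) (k j : ℕ) : 0 ≤ hseq m k j := by
  rw [hseq]; split
  · exact harrisPMF_nonneg hm k _
  · exact le_rfl

lemma hseq_zero (m : ℝ) (k : ℕ) : hseq m k 0 = 0 := by
  rw [hseq, if_neg]; omega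

lemma hseq_one {k : ℕ} (hk : 0 < k) {m : ℝ} (hm : 1 < m) : 0 < hseq m k 1 := by
  have h := hseq_at hk m 0
  simp only [zero_mul, add_zero] at h
  rw [h, harrisPMF_eq, c_zero, pow_zero, one_mul, mul_one]
  have : (0:ℝ) < 1/m := by positivity
  positivity

lemma hseq_form {k : ℕ} (hk : 0 < k) (j : ℕ) :
    (1 ≤ j ∧ k ∣ (j - 1)) ↔ ∃ n, j = 1 + n * k := by
  constructor
  · rintro ⟨h1, t, ht⟩
    refine ⟨t, ?_⟩
    have := Nat.mul_comm k t
    omega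
  · rintro ⟨n, rfl⟩
    exact good_pair n

/-- reconstruction of a "good" tuple -/
lemma good_sum {k : ℕ} (hk : 0 < k) (x : Fin k → ℕ)
    (hgood : ∀ i, 1 ≤ x i ∧ k ∣ (x i - 1)) :
    (∀ i, x i = 1 + ((x i - 1) / k) * k) ∧
      ∑ i, x i = k + (∑ i, (x i - 1) / k) * k := by
  have hrec : ∀ i, x i = 1 + ((x i - 1) / k) * k := by
    intro i
    obtain ⟨h1, t, ht⟩ := hgood i
    have h2 : (x i - 1) / k = t := by rw [ht]; exact Nat.mul_div_cancel_left t hk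
    rw [h2]
    have := Nat.mul_comm k t
    omega
  refine ⟨hrec, ?_⟩
  calc ∑ i, x i = ∑ i, (1 + ((x i - 1) / k) * k) := Finset.sum_congr rfl fun i _ => hrec i
    _ = k + (∑ i, (x i - 1) / k) * k := by
        rw [Finset.sum_add_distrib, Finset.sum_const, Finset.card_univ, Fintype.card_fin,
          smul_eq_mul, mul_one, ← Finset.sum_mul]

/-- if all entries at least 1 and the sum is at most the card, all entries are 1. -/
lemma all_one {ι : Type*} [Fintype ι] (x : ι → ℕ) (h1 : ∀ i, 1 ≤ x i)
    (hs : ∑ i, x i ≤ Fintype.card ι) : ∀ i, x i = 1 := by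
  by_contra hcon
  push_neg at hcon
  obtain ⟨i0, hi0⟩ := hcon
  have h2 : 1 < x i0 := lt_of_le_of_ne (h1 i0) (Ne.symm hi0)
  have hlt : ∑ _i : ι, 1 < ∑ i, x i :=
    Finset.sum_lt_sum (fun i _ => h1 i) ⟨i0, Finset.mem_univ _, h2⟩
  rw [Finset.sum_const, Finset.card_univ, smul_eq_mul, mul_one] at hlt
  omega

lemma spec_sum {k : ℕ} (j : ℕ) (i0 : Fin k) :
    ∑ i, (if i = i0 then j else 1) = j + (k - 1) := by
  rw [← Finset.add_sum_erase _ _ (Finset.mem_univ i0), if_pos rfl]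
  have h : ∀ i ∈ Finset.univ.erase i0, (if i = i0 then j else 1) = 1 := by
    intro i hi
    rw [if_neg (Finset.mem_erase.mp hi).1]
  rw [Finset.sum_congr rfl h, Finset.sum_const, Finset.card_erase_of_mem (Finset.mem_univ i0),
    Finset.card_univ, Fintype.card_fin, smul_eq_mul, mul_one]

lemma spec_prod {k : ℕ} (f : ℕ → ℝ) (j : ℕ) (i0 : Fin k) :
    ∏ i, f (if i = i0 then j else 1) = f j * f 1 ^ (k - 1) := by
  rw [← Finset.mul_prod_erase _ _ (Finset.mem_univ i0), if_pos rfl]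
  have h : ∀ i ∈ Finset.univ.erase i0, f (if i = i0 then j else 1) = f 1 := by
    intro i hi
    rw [if_neg (Finset.mem_erase.mp hi).1]
  rw [Finset.prod_congr rfl h, Finset.prod_const, Finset.card_erase_of_mem (Finset.mem_univ i0),
    Finset.card_univ, Fintype.card_fin]

lemma lemA {k : ℕ} (hk : 0 < k) {m : ℝ} (hm : 1 < m) (N : ℕ) :
    ∑ x ∈ Finset.Nat.antidiagonalTuple k N, ∏ i, hseq m k (x i) = gseq (1/m) k N := by
  classical
  have hm0 : (0:ℝ) < m := by linarith
  by_cases hex : ∃ n', N = k + n' * k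
  · obtain ⟨n', rfl⟩ := hex
    have hfilter : ∑ x ∈ (Finset.Nat.antidiagonalTuple k (k + n' * k)).filter
          (fun x => ∀ i, 1 ≤ x i ∧ k ∣ (x i - 1)), ∏ i, hseq m k (x i)
        = ∑ x ∈ Finset.Nat.antidiagonalTuple k (k + n' * k), ∏ i, hseq m k (x i) := by
      apply Finset.sum_filter_of_ne
      intro x _ hne i
      by_contra hbad
      exact hne (Finset.prod_eq_zero (Finset.mem_univ i) (by rw [hseq, if_neg hbad]))
    rw [← hfilter]
    have hbij : ∑ x ∈ (Finset.Nat.antidiagonalTuple k (k + n' * k)).filter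
          (fun x => ∀ i, 1 ≤ x i ∧ k ∣ (x i - 1)), ∏ i, hseq m k (x i)
        = ∑ y ∈ Finset.Nat.antidiagonalTuple k n', ∏ i, hseq m k (1 + y i * k) := by
      refine Finset.sum_nbij' (i := fun x => fun i => (x i - 1) / k)
        (j := fun y => fun i => 1 + y i * k) ?_ ?_ ?_ ?_ ?_
      · intro x hx
        rw [Finset.mem_filter] at hx
        obtain ⟨hx1, hx2⟩ := hx
        rw [Finset.Nat.mem_antidiagonalTuple] at hx1
        rw [Finset.Nat.mem_antidiagonalTuple]
        obtain ⟨_, hsum⟩ := good_sum hk x hx2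
        rw [hsum] at hx1
        show ∑ i, (x i - 1) / k = n'
        exact Nat.eq_of_mul_eq_mul_right hk (by omega)
      · intro y hy
        rw [Finset.Nat.mem_antidiagonalTuple] at hy
        rw [Finset.mem_filter, Finset.Nat.mem_antidiagonalTuple]
        constructor
        · rw [Finset.sum_add_distrib, Finset.sum_const, Finset.card_univ, Fintype.card_fin,
            smul_eq_mul, mul_one, ← Finset.sum_mul, hy]
        · intro i
          exact good_pair (y i)
      · intro x hx
        rw [Finset.mem_filter] at hx
        funext i
        exact ((good_sum hk x hx.2).1 i).symm
      · intro y _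
        funext i
        simp [Nat.mul_div_cancel _ hk]
      · intro x hx
        rw [Finset.mem_filter] at hx
        apply Finset.prod_congr rfl
        intro i _
        congr 1
        exact (good_sum hk x hx.2).1 i
    rw [hbij]
    have hkR : ((k:ℝ)) ≠ 0 := by positivity
    have hval : ∀ y ∈ Finset.Nat.antidiagonalTuple k n', ∏ i, hseq m k (1 + y i * k)
        = (∏ i, c (1/(k:ℝ)) (y i)) * ((1 - 1/m) ^ n' * (1/m)) := by
      intro y hy
      rw [Finset.Nat.mem_antidiagonalTuple] at hy
      have hterm : ∀ i ∈ (Finset.univ : Finset (Fin k)), hseq m k (1 + y i * k)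
          = c (1/(k:ℝ)) (y i) * ((1/m) ^ ((1:ℝ)/k) * (1 - 1/m) ^ (y i)) := by
        intro i _
        rw [hseq_at hk, harrisPMF_eq, mul_assoc]
      rw [Finset.prod_congr rfl hterm, Finset.prod_mul_distrib, Finset.prod_mul_distrib]
      rw [Finset.prod_const, Finset.prod_pow_eq_pow_sum, hy, Finset.card_univ, Fintype.card_fin]
      have hp : (((1:ℝ)/m) ^ ((1:ℝ)/k)) ^ k = 1/m := by
        rw [← Real.rpow_natCast ((1/m) ^ ((1:ℝ)/k)) k, ← Real.rpow_mul (by positivity),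
          one_div_mul_cancel hkR, Real.rpow_one]
      rw [hp]
      ring
    rw [Finset.sum_congr rfl hval, ← Finset.sum_mul, vandk, one_div,
      mul_inv_cancel₀ hkR]
    rw [c_one, one_mul]
    rw [gseq, if_pos ⟨1 + n', by ring⟩]
    have hdiv : (k + n' * k) / k = 1 + n' := by
      rw [show k + n' * k = (1 + n') * k by ring, Nat.mul_div_cancel _ hk]
    rw [hdiv, geoKPMF, if_neg (by omega)]
    simp
  · have hg : gseq (1/m) k N = 0 := by
      rw [gseq]
      split
      · rename_i hdvd
        obtain ⟨t, rfl⟩ := hdvd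
        rcases Nat.eq_zero_or_pos t with rfl | ht
        · simp [geoKPMF]
        · refine absurd ⟨t - 1, ?_⟩ hex
          have h1 := Nat.mul_comm k t
          have h2 := Nat.sub_mul t 1 k
          have h3 : 1 * k ≤ t * k := Nat.mul_le_mul_right k ht
          omega
      · rfl
    rw [hg]
    apply Finset.sum_eq_zero
    intro x hx
    rw [Finset.Nat.mem_antidiagonalTuple] at hx
    by_cases hgood : ∀ i, 1 ≤ x i ∧ k ∣ (x i - 1)
    · obtain ⟨_, hsum⟩ := good_sum hk x hgood
      exact absurd ⟨∑ i, (x i - 1) / k, by omega⟩ hex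
    · push_neg at hgood
      obtain ⟨i, hbad⟩ := hgood
      refine Finset.prod_eq_zero (Finset.mem_univ i) ?_
      rw [hseq, if_neg]
      intro hcon
      exact hbad hcon.1 hcon.2

lemma lemB {k : ℕ} (hk : 0 < k) {a h : ℕ → ℝ} (ha : ∀ j, 0 ≤ a j) (hh : ∀ j, 0 ≤ h j)
    (h0 : h 0 = 0) (h1 : 0 < h 1)
    (heq : ∀ N, ∑ x ∈ Finset.Nat.antidiagonalTuple k N, ∏ i, a (x i)
             = ∑ x ∈ Finset.Nat.antidiagonalTuple k N, ∏ i, h (x i)) :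
    ∀ j, a j = h j := by
  intro j
  induction j using Nat.strong_induction_on with
  | _ j IH =>
  match j, IH with
  | 0, IH => ?_
  | 1, IH => ?_
  | (j+2), IH => ?_
  case _ =>
    have e := heq 0
    rw [Finset.Nat.antidiagonalTuple_zero_right, Finset.sum_singleton, Finset.sum_singleton] at e
    simp only [Pi.zero_apply, Finset.prod_const, Finset.card_univ, Fintype.card_fin] at e
    rw [h0, zero_pow hk.ne'] at e
    rw [h0]
    exact pow_eq_zero_iff hk.ne' |>.mp e
  case _ =>
    have ha0 : a 0 = 0 := by
      have := IH 0 (by omega)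
      rw [this, h0]
    -- sum over antidiagonalTuple k k reduces to the all-ones tuple
    have key : ∀ (f : ℕ → ℝ), f 0 = 0 →
        ∑ x ∈ Finset.Nat.antidiagonalTuple k k, ∏ i, f (x i) = f 1 ^ k := by
      intro f hf0
      rw [Finset.sum_eq_single_of_mem (fun _ => 1)]
      · rw [Finset.prod_const, Finset.card_univ, Fintype.card_fin]
      · rw [Finset.Nat.mem_antidiagonalTuple]
        simp
      · intro x hx hne
        rw [Finset.Nat.mem_antidiagonalTuple] at hx
        by_cases hz : ∀ i, 1 ≤ x i
        · exfalso
          apply hne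
          funext i
          exact all_one x hz (by rw [hx, Fintype.card_fin]) i
        · push_neg at hz
          obtain ⟨i, hi⟩ := hz
          refine Finset.prod_eq_zero (Finset.mem_univ i) ?_
          have : x i = 0 := by omega
          rw [this, hf0]
    have e := heq k
    rw [key a ha0, key h h0] at e
    exact (pow_left_inj₀ (ha 1) (hh 1) hk.ne').mp e
  case _ =>
    classical
    set j' := j + 2 with hj'
    have ha0 : a 0 = 0 := by rw [IH 0 (by omega), h0]
    have ha1 : a 1 = h 1 := IH 1 (by omega)
    set N := j' + (k - 1) with hN
    set T : Finset (Fin k → ℕ) :=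
      Finset.image (fun i0 : Fin k => fun i => if i = i0 then j' else 1) Finset.univ with hT
    have hTsub : T ⊆ Finset.Nat.antidiagonalTuple k N := by
      intro x hx
      rw [hT, Finset.mem_image] at hx
      obtain ⟨i0, _, rfl⟩ := hx
      rw [Finset.Nat.mem_antidiagonalTuple]
      exact spec_sum j' i0
    have hclass : ∀ x ∈ Finset.Nat.antidiagonalTuple k N, x ∉ T →
        ∏ i, a (x i) = ∏ i, h (x i) := by
      intro x hx hxT
      rw [Finset.Nat.mem_antidiagonalTuple] at hx
      by_cases hz : ∀ i, 1 ≤ x i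
      · by_cases hbig : ∃ i0, j' ≤ x i0
        · exfalso
          obtain ⟨i0, hi0⟩ := hbig
          have hxi0 : ∀ i, x i = if i = i0 then j' else 1 := by
            have hsmall : ∀ i, i ≠ i0 → x i = 1 := by
              have hs : ∑ i ∈ Finset.univ.erase i0, x i ≤ k - 1 := by
                have : x i0 + ∑ i ∈ Finset.univ.erase i0, x i = ∑ i, x i :=
                  Finset.add_sum_erase _ _ (Finset.mem_univ i0)
                omega
              -- all entries on erase at least 1, sum ≤ card erase = k - 1
              intro i hi
              by_contra hcon
              have h2 : 1 < x i := lt_of_le_of_ne (hz i) (Ne.symm hcon)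
              have hlt : ∑ _i ∈ Finset.univ.erase i0, 1 < ∑ i ∈ Finset.univ.erase i0, x i :=
                Finset.sum_lt_sum (fun i _ => hz i)
                  ⟨i, Finset.mem_erase.mpr ⟨hi, Finset.mem_univ i⟩, h2⟩
              rw [Finset.sum_const, Finset.card_erase_of_mem (Finset.mem_univ i0),
                Finset.card_univ, Fintype.card_fin, smul_eq_mul, mul_one] at hlt
              omega
            have hxi : x i0 = j' := by
              have h3 : x i0 + ∑ i ∈ Finset.univ.erase i0, x i = ∑ i, x i :=
                Finset.add_sum_erase _ _ (Finset.mem_univ i0)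
              have h4 : ∑ i ∈ Finset.univ.erase i0, x i
                  = ∑ _i ∈ Finset.univ.erase i0, 1 :=
                Finset.sum_congr rfl fun i hi => hsmall i (Finset.mem_erase.mp hi).1
              rw [h4, Finset.sum_const, Finset.card_erase_of_mem (Finset.mem_univ i0),
                Finset.card_univ, Fintype.card_fin, smul_eq_mul, mul_one] at h3
              omega
            intro i
            by_cases hii : i = i0
            · rw [hii, if_pos rfl, hxi]
            · rw [if_neg hii]; exact hsmall i hii
          apply hxT
          rw [hT, Finset.mem_image]
          exact ⟨i0, Finset.mem_univ i0, by funext i; exact (hxi0 i).symm⟩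
        · push_neg at hbig
          apply Finset.prod_congr rfl
          intro i _
          exact IH (x i) (by have := hbig i; omega)
      · push_neg at hz
        obtain ⟨i, hi⟩ := hz
        have hxi : x i = 0 := by omega
        rw [Finset.prod_eq_zero (Finset.mem_univ i) (by rw [hxi, ha0]),
          Finset.prod_eq_zero (Finset.mem_univ i) (by rw [hxi, h0])]
    have hsub : ∑ x ∈ Finset.Nat.antidiagonalTuple k N, (∏ i, a (x i) - ∏ i, h (x i))
        = ∑ x ∈ T, (∏ i, a (x i) - ∏ i, h (x i)) :=
      (Finset.sum_subset hTsub (fun x hx hxT => by rw [hclass x hx hxT, sub_self])).symm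
    have hzero : ∑ x ∈ Finset.Nat.antidiagonalTuple k N, (∏ i, a (x i) - ∏ i, h (x i)) = 0 := by
      rw [Finset.sum_sub_distrib, heq N, sub_self]
    have hinj : ∀ i0 ∈ (Finset.univ : Finset (Fin k)), ∀ i1 ∈ (Finset.univ : Finset (Fin k)),
        (fun i => if i = i0 then j' else 1) = (fun i => if i = i1 then j' else 1) → i0 = i1 := by
      intro i0 _ i1 _ hfe
      by_contra hne
      have hev := congrFun hfe i0
      rw [if_pos rfl, if_neg hne] at hev
      omega
    have hTsum : ∑ x ∈ T, (∏ i, a (x i) - ∏ i, h (x i))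
        = (k : ℝ) * ((a j' - h j') * h 1 ^ (k-1)) := by
      rw [hT, Finset.sum_image hinj]
      have hconst : ∀ i0 ∈ (Finset.univ : Finset (Fin k)),
          (∏ i, a (if i = i0 then j' else 1) - ∏ i, h (if i = i0 then j' else 1))
            = (a j' - h j') * h 1 ^ (k-1) := by
        intro i0 _
        rw [spec_prod a j' i0, spec_prod h j' i0, ha1]
        ring
      rw [Finset.sum_congr rfl hconst, Finset.sum_const, Finset.card_univ, Fintype.card_fin,
        nsmul_eq_mul]
    have hfinal : (k : ℝ) * ((a j' - h j') * h 1 ^ (k-1)) = 0 := by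
      rw [← hTsum, ← hsub, hzero]
    have hkR : ((k:ℝ)) ≠ 0 := by positivity
    have hpow : h 1 ^ (k-1) ≠ 0 := (pow_pos h1 _).ne'
    rcases mul_eq_zero.mp hfinal with h' | h'
    · exact absurd h' hkR
    rcases mul_eq_zero.mp h' with h'' | h''
    · linarith [h'']
    · exact absurd h'' hpow

end HarrisAux2
namespace HarrisAux3
open HarrisAux HarrisAux2

lemma summable_c_mul_pow {α q : ℝ} (h0 : 0 ≤ α) (h1 : α ≤ 1) (hq0 : 0 ≤ q) (hq1 : q < 1) :
    Summable (fun n => c α n * q ^ n) := by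
  apply Summable.of_nonneg_of_le
    (fun n => mul_nonneg (c_nonneg h0 n) (pow_nonneg hq0 n))
    (fun n => ?_) (summable_geometric_of_lt_one hq0 hq1)
  have hc := c_le_one h0 h1 n
  have hp := pow_nonneg hq0 n
  nlinarith [c_nonneg h0 n]

lemma tsum_c_mul {α β q : ℝ} (hα0 : 0 ≤ α) (hα1 : α ≤ 1) (hβ0 : 0 ≤ β) (hβ1 : β ≤ 1)
    (hq0 : 0 ≤ q) (hq1 : q < 1) :
    (∑' n, c α n * q ^ n) * (∑' n, c β n * q ^ n) = ∑' n, c (α + β) n * q ^ n := by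
  have hf : Summable (fun n => ‖c α n * q ^ n‖) := by
    apply Summable.congr (summable_c_mul_pow hα0 hα1 hq0 hq1)
    intro n
    rw [Real.norm_eq_abs, abs_of_nonneg (mul_nonneg (c_nonneg hα0 n) (pow_nonneg hq0 n))]
  have hg : Summable (fun n => ‖c β n * q ^ n‖) := by
    apply Summable.congr (summable_c_mul_pow hβ0 hβ1 hq0 hq1)
    intro n
    rw [Real.norm_eq_abs, abs_of_nonneg (mul_nonneg (c_nonneg hβ0 n) (pow_nonneg hq0 n))]
  rw [tsum_mul_tsum_eq_tsum_sum_antidiagonal_of_summable_norm hf hg]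
  apply tsum_congr
  intro n
  have : ∀ ij ∈ Finset.HasAntidiagonal.antidiagonal n,
      c α ij.1 * q ^ ij.1 * (c β ij.2 * q ^ ij.2) = (c α ij.1 * c β ij.2) * q ^ n := by
    intro ij hij
    rw [← Finset.HasAntidiagonal.mem_antidiagonal.mp hij, pow_add]
    ring
  rw [Finset.sum_congr rfl this, ← Finset.sum_mul, vand2]

lemma tsum_c_pow {k : ℕ} (hk : 0 < k) {q : ℝ} (hq0 : 0 ≤ q) (hq1 : q < 1) (j : ℕ)
    (hj1 : 1 ≤ j) (hjk : j ≤ k) :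
    (∑' n, c (1/(k:ℝ)) n * q ^ n) ^ j = ∑' n, c ((j:ℝ)/(k:ℝ)) n * q ^ n := by
  have hkR : (0:ℝ) < (k:ℝ) := by exact_mod_cast hk
  induction j with
  | zero => omega
  | succ j ih =>
    rcases Nat.eq_zero_or_pos j with rfl | hj
    · simp [pow_one]
    · have hjk' : j ≤ k := by omega
      have hjj : ((j:ℝ)/(k:ℝ)) ≤ 1 := by
        rw [div_le_one hkR]; exact_mod_cast hjk'
      have h1k : (0:ℝ) ≤ 1/(k:ℝ) := by positivity
      have h1k1 : (1:ℝ)/(k:ℝ) ≤ 1 := by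
        rw [div_le_one hkR]; exact_mod_cast hk
      rw [pow_succ, ih hj hjk', tsum_c_mul (by positivity) hjj h1k h1k1 hq0 hq1]
      congr 1
      funext n
      congr 2
      push_cast
      field_simp

lemma summable_harris {k : ℕ} (hk : 0 < k) {m : ℝ} (hm : 1 < m) :
    Summable (fun n => harrisPMF m k n) := by
  have hkR : (0:ℝ) < (k:ℝ) := by exact_mod_cast hk
  have hq0 : (0:ℝ) ≤ 1 - 1/m := by
    have : 1/m ≤ 1 := by rw [div_le_one (by linarith)]; linarith
    linarith
  have hq1 : 1 - 1/m < 1 := by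
    have : (0:ℝ) < 1/m := by positivity
    linarith
  have h := (summable_c_mul_pow (α := 1/(k:ℝ)) (q := 1 - 1/m) (by positivity)
    (by rw [div_le_one hkR]; exact_mod_cast hk) hq0 hq1).mul_left ((1/m) ^ ((1:ℝ)/(k:ℝ)))
  apply h.congr
  intro n
  rw [harrisPMF_eq]
  ring

lemma tsum_harris {k : ℕ} (hk : 0 < k) {m : ℝ} (hm : 1 < m) :
    ∑' n, harrisPMF m k n = 1 := by
  have hkR : (0:ℝ) < (k:ℝ) := by exact_mod_cast hk
  have hm0 : (0:ℝ) < m := by linarith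
  have hp0 : (0:ℝ) < 1/m := by positivity
  have hq0 : (0:ℝ) ≤ 1 - 1/m := by
    have : 1/m ≤ 1 := by rw [div_le_one hm0]; linarith
    linarith
  have hq1 : 1 - 1/m < 1 := by linarith
  set q : ℝ := 1 - 1/m with hqdef
  set T : ℝ := ∑' n, c (1/(k:ℝ)) n * q ^ n with hTdef
  have hTnonneg : 0 ≤ T := by
    apply tsum_nonneg
    intro n
    exact mul_nonneg (c_nonneg (by positivity) n) (pow_nonneg hq0 n)
  have hTk : T ^ k = (1/m)⁻¹ := by
    rw [hTdef, tsum_c_pow hk hq0 hq1 k hk le_rfl, div_self (ne_of_gt hkR)]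
    have : ∀ n, c (1:ℝ) n * q ^ n = q ^ n := fun n => by rw [c_one, one_mul]
    rw [tsum_congr this, tsum_geometric_of_lt_one hq0 hq1]
    rw [hqdef]
    congr 1
    ring
  have hT : T = ((1/m)⁻¹) ^ ((1:ℝ)/(k:ℝ)) := by
    rw [← hTk, ← Real.rpow_natCast T k, ← Real.rpow_mul hTnonneg]
    rw [mul_one_div, div_self (ne_of_gt hkR), Real.rpow_one]
  have hsum : ∑' n, harrisPMF m k n = (1/m) ^ ((1:ℝ)/(k:ℝ)) * T := by
    rw [hTdef, ← tsum_mul_left]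
    apply tsum_congr
    intro n
    rw [harrisPMF_eq]
    ring
  rw [hsum, hT, ← Real.mul_rpow (by positivity) (by positivity)]
  rw [mul_inv_cancel₀ (ne_of_gt hp0), Real.one_rpow]

lemma geo_nonneg {p : ℝ} (hp0 : 0 ≤ p) (hp1 : p ≤ 1) (n : ℕ) : 0 ≤ geoKPMF p n := by
  rw [geoKPMF]
  split
  · exact le_rfl
  · exact mul_nonneg (pow_nonneg (by linarith) _) hp0

lemma summable_geo {p : ℝ} (hp0 : 0 < p) (hp1 : p < 1) : Summable (geoKPMF p) := by
  rw [← summable_nat_add_iff 1]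
  have : (fun n => geoKPMF p (n + 1)) = fun n => (1 - p) ^ n * p := by
    funext n
    rw [geoKPMF, if_neg (Nat.succ_ne_zero n)]
    simp
  rw [this]
  exact (summable_geometric_of_lt_one (by linarith) (by linarith)).mul_right p

lemma tsum_geo {p : ℝ} (hp0 : 0 < p) (hp1 : p < 1) : ∑' n, geoKPMF p n = 1 := by
  rw [Summable.tsum_eq_zero_add (summable_geo hp0 hp1)]
  have h0 : geoKPMF p 0 = 0 := by rw [geoKPMF, if_pos rfl]
  have h1 : (fun n => geoKPMF p (n + 1)) = fun n => (1 - p) ^ n * p := by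
    funext n
    rw [geoKPMF, if_neg (Nat.succ_ne_zero n)]
    simp
  rw [h0, h1, zero_add, tsum_mul_right, tsum_geometric_of_lt_one (by linarith) (by linarith)]
  have : 1 - (1 - p) = p := by ring
  rw [this, inv_mul_cancel₀ (ne_of_gt hp0)]

end HarrisAux3
namespace HarrisAux4
open HarrisAux HarrisAux2 HarrisAux3 MeasureTheory ProbabilityTheory

lemma meas_sum_apply {Ω : Type*} [MeasurableSpace Ω] (μ : Measure Ω)
    {k : ℕ} (X : Fin k → Ω → ℕ) (hmeas : ∀ i, Measurable (X i))
    (hindep : iIndepFun X μ) (N : ℕ) :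
    μ ((fun ω => ∑ i, X i ω) ⁻¹' {N})
      = ∑ x ∈ Finset.Nat.antidiagonalTuple k N, ∏ i, μ (X i ⁻¹' {x i}) := by
  have hset : (fun ω => ∑ i, X i ω) ⁻¹' {N}
      = ⋃ x ∈ Finset.Nat.antidiagonalTuple k N, ⋂ i, X i ⁻¹' {x i} := by
    ext ω
    simp only [Set.mem_preimage, Set.mem_singleton_iff, Set.mem_iUnion, Set.mem_iInter,
      Finset.Nat.mem_antidiagonalTuple]
    constructor
    · intro hsum
      exact ⟨fun i => X i ω, hsum, fun i => rfl⟩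
    · rintro ⟨x, hx, hxi⟩
      rw [← hx]
      exact Finset.sum_congr rfl fun i _ => hxi i
  rw [hset, measure_biUnion_finset]
  · apply Finset.sum_congr rfl
    intro x _
    have := hindep.measure_inter_preimage_eq_mul (S := Finset.univ)
      (sets := fun i => {x i}) (fun i _ => measurableSet_singleton _)
    simpa using this
  · intro x hx y hy hxy
    rw [Function.onFun]
    rw [Set.disjoint_left]
    intro ω hωx hωy
    apply hxy
    funext i
    simp only [Set.mem_iInter, Set.mem_preimage, Set.mem_singleton_iff] at hωx hωy
    rw [← hωx i, ← hωy i]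
  · intro x _
    exact MeasurableSet.iInter fun i => hmeas i (measurableSet_singleton _)

/-- total mass through a countable family of singletons -/
lemma meas_compl_zero {ν : Measure ℕ} [IsProbabilityMeasure ν] (e : ℕ → ℕ)
    (he : Function.Injective e) (htot : ∑' n, ν {e n} = 1) (j : ℕ) (hj : ∀ n, j ≠ e n) :
    ν {j} = 0 := by
  have hpair : Pairwise (Function.onFun Disjoint (fun n => ({e n} : Set ℕ))) := by
    intro a b hab
    simp only [Function.onFun, Set.disjoint_left, Set.mem_singleton_iff]
    rintro x rfl h2
    exact hab (he h2)
  have hU : ν (⋃ n, {e n}) = 1 := by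
    rw [measure_iUnion hpair (fun n => measurableSet_singleton _)]
    exact htot
  have hdisj : Disjoint {j} (⋃ n, {e n} : Set ℕ) := by
    simp only [Set.disjoint_left, Set.mem_singleton_iff, Set.mem_iUnion]
    rintro a rfl ⟨n, hn⟩
    exact hj n (by simpa using hn)
  have hle : ν {j} + ν (⋃ n, {e n}) ≤ 1 := by
    rw [← measure_union hdisj (MeasurableSet.iUnion fun n => measurableSet_singleton _)]
    exact prob_le_one
  rw [hU] at hle
  have hle2 : ν {j} + 1 ≤ 0 + 1 := by simpa using hle
  exact le_antisymm (ENNReal.le_of_add_le_add_right (by norm_num) hle2) zero_le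

end HarrisAux4
open ProbabilityTheory MeasureTheory

open HarrisAux HarrisAux2 HarrisAux3 HarrisAux4

/-- `X₁, …, X_k` are i.i.d. Harris `H₁(m,k,1/k)` if and only if their sum is
`Geo_k(p,k)` with `p = 1/m`. -/
theorem iid_harris_iff_sum_extended_geometric
    (k : ℕ) (hk : 0 < k) (m : ℝ) (hm : 1 < m)
    {Ω : Type*} [MeasurableSpace Ω] (μ : Measure Ω) [IsProbabilityMeasure μ]
    (X : Fin k → Ω → ℕ) (hmeas : ∀ i, Measurable (X i))
    (hindep : iIndepFun X μ)
    (hident : ∀ i j, Measure.map (X i) μ = Measure.map (X j) μ) :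
    (∀ i, ∀ n : ℕ, Measure.map (X i) μ {1 + n * k} = ENNReal.ofReal (harrisPMF m k n)) ↔
    (∀ n : ℕ, Measure.map (fun ω => ∑ i, X i ω) μ {n * k} = ENNReal.ofReal (geoKPMF (1 / m) n)) := by
  have hm0 : (0:ℝ) < m := by linarith
  have hp0 : (0:ℝ) < 1/m := by positivity
  have hp1 : (1:ℝ)/m < 1 := by rw [div_lt_one hm0]; linarith
  set S : Ω → ℕ := fun ω => ∑ i, X i ω with hSdef
  have hSmeas : Measurable S := Finset.measurable_sum _ (fun i _ => hmeas i)
  have hSapply : ∀ N : ℕ, Measure.map S μ {N} = μ (S ⁻¹' {N}) := fun N =>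
    Measure.map_apply hSmeas (measurableSet_singleton N)
  have hXapply : ∀ i (j : ℕ), Measure.map (X i) μ {j} = μ (X i ⁻¹' {j}) := fun i j =>
    Measure.map_apply (hmeas i) (measurableSet_singleton j)
  set i0 : Fin k := ⟨0, hk⟩ with hi0
  set ν : Measure ℕ := Measure.map (X i0) μ with hν
  have : IsProbabilityMeasure ν := Measure.isProbabilityMeasure_map (hmeas i0).aemeasurable
  have hid : ∀ i (j : ℕ), μ (X i ⁻¹' {j}) = ν {j} := by
    intro i j
    rw [← hXapply i j, hident i i0]
  set a : ℕ → ℝ := fun j => (ν {j}).toReal with ha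
  have ha_nonneg : ∀ j, 0 ≤ a j := fun j => ENNReal.toReal_nonneg
  have hfin : ∀ j : ℕ, ν {j} ≠ ⊤ := fun j => measure_ne_top ν {j}
  have hνa : ∀ j : ℕ, ν {j} = ENNReal.ofReal (a j) := fun j =>
    (ENNReal.ofReal_toReal (hfin j)).symm
  have hkey : ∀ N : ℕ, Measure.map S μ {N}
      = ENNReal.ofReal (∑ x ∈ Finset.Nat.antidiagonalTuple k N, ∏ i, a (x i)) := by
    intro N
    rw [hSapply, meas_sum_apply μ X hmeas hindep N,
      ENNReal.ofReal_sum_of_nonneg (fun x _ =>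
        Finset.prod_nonneg (fun i _ => ha_nonneg (x i)))]
    apply Finset.sum_congr rfl
    intro x _
    rw [ENNReal.ofReal_prod_of_nonneg (fun i _ => ha_nonneg (x i))]
    apply Finset.prod_congr rfl
    intro i _
    rw [hid i (x i), hνa (x i)]
  have hsumnn : ∀ N : ℕ, 0 ≤ ∑ x ∈ Finset.Nat.antidiagonalTuple k N, ∏ i, a (x i) :=
    fun N => Finset.sum_nonneg (fun x _ => Finset.prod_nonneg (fun i _ => ha_nonneg (x i)))
  have hgseq_nonneg : ∀ N, 0 ≤ gseq (1/m) k N := by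
    intro N
    rw [gseq]
    split
    · exact geo_nonneg hp0.le hp1.le _
    · exact le_rfl
  have hgseq_at : ∀ n : ℕ, gseq (1/m) k (n * k) = geoKPMF (1/m) n := by
    intro n
    rw [gseq, if_pos ⟨n, Nat.mul_comm n k⟩, Nat.mul_div_cancel n hk]
  constructor
  · -- Harris marginals ⇒ geometric sum
    intro hyp n
    have htot : ∑' n : ℕ, ν {1 + n * k} = 1 := by
      have : ∀ n : ℕ, ν {1 + n * k} = ENNReal.ofReal (harrisPMF m k n) := fun n => hyp i0 n
      rw [tsum_congr this, ← ENNReal.ofReal_tsum_of_nonneg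
        (fun n => harrisPMF_nonneg hm.le k n) (summable_harris hk hm),
        tsum_harris hk hm, ENNReal.ofReal_one]
    have haj : ∀ j, a j = hseq m k j := by
      intro j
      by_cases hex : ∃ n, j = 1 + n * k
      · obtain ⟨n, rfl⟩ := hex
        rw [hseq_at hk, ha]
        simp only
        rw [hyp i0 n, ENNReal.toReal_ofReal (harrisPMF_nonneg hm.le k n)]
      · have h0 : ν {j} = 0 := by
          have hinj1 : ∀ n1 n2 : ℕ, 1 + n1 * k = 1 + n2 * k → n1 = n2 := by
            intro n1 n2 h12
            exact Nat.eq_of_mul_eq_mul_right hk (by omega)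
          apply meas_compl_zero (fun n => 1 + n * k) (fun n1 n2 h12 => hinj1 n1 n2 h12) htot j
          intro n hn
          exact hex ⟨n, hn⟩
        have h1 : a j = 0 := by rw [ha]; simp only [h0, ENNReal.toReal_zero]
        rw [h1, hseq, if_neg]
        intro hcon
        exact hex ((hseq_form hk j).mp hcon)
    rw [hkey (n * k)]
    congr 1
    calc ∑ x ∈ Finset.Nat.antidiagonalTuple k (n * k), ∏ i, a (x i)
        = ∑ x ∈ Finset.Nat.antidiagonalTuple k (n * k), ∏ i, hseq m k (x i) :=
          Finset.sum_congr rfl fun x _ => Finset.prod_congr rfl fun i _ => haj (x i)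
      _ = gseq (1/m) k (n * k) := lemA hk hm (n * k)
      _ = geoKPMF (1/m) n := hgseq_at n
  · -- geometric sum ⇒ Harris marginals
    intro hyp i n
    have : IsProbabilityMeasure (Measure.map S μ) :=
      Measure.isProbabilityMeasure_map hSmeas.aemeasurable
    have htotS : ∑' n : ℕ, Measure.map S μ {n * k} = 1 := by
      rw [tsum_congr hyp, ← ENNReal.ofReal_tsum_of_nonneg
        (fun n => geo_nonneg hp0.le hp1.le n) (summable_geo hp0 hp1),
        tsum_geo hp0 hp1, ENNReal.ofReal_one]
    have hreal : ∀ N, ∑ x ∈ Finset.Nat.antidiagonalTuple k N, ∏ i, a (x i)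
        = gseq (1/m) k N := by
      intro N
      have hEN : Measure.map S μ {N} = ENNReal.ofReal (gseq (1/m) k N) := by
        by_cases hdvd : k ∣ N
        · obtain ⟨t, rfl⟩ := hdvd
          rw [show k * t = t * k from Nat.mul_comm k t, hyp t, gseq,
            if_pos ⟨t, Nat.mul_comm t k⟩, Nat.mul_div_cancel t hk]
        · have h0 : Measure.map S μ {N} = 0 := by
            apply meas_compl_zero (fun n => n * k)
              (fun n1 n2 h12 => Nat.eq_of_mul_eq_mul_right hk h12) htotS N
            intro t ht
            exact hdvd ⟨t, by rw [ht, Nat.mul_comm]⟩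
          rw [h0, gseq, if_neg hdvd, ENNReal.ofReal_zero]
      have := (hkey N).symm.trans hEN
      exact (ENNReal.ofReal_eq_ofReal_iff (hsumnn N) (hgseq_nonneg N)).mp this
    have haj : ∀ j, a j = hseq m k j := by
      apply lemB hk ha_nonneg (fun j => hseq_nonneg hm.le k j) (hseq_zero m k)
        (hseq_one hk hm)
      intro N
      rw [hreal N, lemA hk hm N]
    have hi : Measure.map (X i) μ {1 + n * k} = ν {1 + n * k} := by
      rw [hident i i0]
    rw [hi, hνa, haj, hseq_at hk]
end

section
/- Let L : [0,∞) → (0,1] be the Laplace transform of a probability distribution on (0,∞), differentiable with L(0)=1 and L'(0) = -α for some α > 0. Then L satisfies L'(s) = L(s)·log L(s) / ((1+s)·log(1+s)) for all s > 0 if and only if L(s) = (1+s)^{-α}, the Laplace transform of the gamma(α,1) distribution. -/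
open MeasureTheory

/-- The Laplace transform `L` of a probability distribution on `(0,∞)` with
`L'(0) = -α`, `α > 0`, satisfies `L'(s) = L(s) log L(s) / ((1+s) log(1+s))`
for all `s > 0` if and only if `L(s) = (1+s)^{-α}`, the Laplace transform of
the gamma(α,1) distribution. -/
theorem laplace_ode_characterizes_gamma
    (μ : Measure ℝ) [IsProbabilityMeasure μ] (hμ : μ (Set.Ioi (0:ℝ))ᶜ = 0)
    (L L' : ℝ → ℝ)
    (hL : ∀ s : ℝ, 0 ≤ s → L s = ∫ x, Real.exp (-(s * x)) ∂μ)
    (hderiv : ∀ s ∈ Set.Ici (0:ℝ), HasDerivWithinAt L (L' s) (Set.Ici 0) s)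
    (hmem : ∀ s : ℝ, 0 ≤ s → L s ∈ Set.Ioc (0:ℝ) 1)
    (hL0 : L 0 = 1) (α : ℝ) (hα : 0 < α) (hL'0 : L' 0 = -α) :
    (∀ s : ℝ, 0 < s → L' s = L s * Real.log (L s) / ((1 + s) * Real.log (1 + s))) ↔
    (∀ s : ℝ, 0 ≤ s → L s = (1 + s) ^ (-α)) := by
  have hLpos : ∀ s : ℝ, 0 ≤ s → 0 < L s := fun s hs => (hmem s hs).1
  have h1s : ∀ s : ℝ, 0 < s → (0:ℝ) < 1 + s := fun s hs => by linarith
  have hlogne : ∀ s : ℝ, 0 < s → Real.log (1 + s) ≠ 0 := fun s hs =>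
    ne_of_gt (Real.log_pos (by linarith))
  -- derivative of t ↦ 1 + t
  have hbase : ∀ s : ℝ, HasDerivAt (fun t : ℝ => 1 + t) 1 s := fun s => by
    simpa using (hasDerivAt_id s).const_add (1:ℝ)
  -- derivative of t ↦ log (1+t)
  have hlder : ∀ s : ℝ, 0 ≤ s → HasDerivAt (fun t : ℝ => Real.log (1 + t)) ((1 + s)⁻¹) s := by
    intro s hs
    have h1 : (1:ℝ) + s ≠ 0 := by positivity
    simpa [Function.comp_def] using (Real.hasDerivAt_log h1).comp s (hbase s)
  constructor
  · -- forward direction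
    intro hode
    set g : ℝ → ℝ := fun t => Real.log (L t) with hg_def
    set l : ℝ → ℝ := fun t => Real.log (1 + t) with hl_def
    set H : ℝ → ℝ := fun t => g t / l t with hH_def
    -- HasDerivAt L at positive points
    have hLd : ∀ s : ℝ, 0 < s → HasDerivAt L (L' s) s := fun s hs =>
      (hderiv s hs.le).hasDerivAt (Ici_mem_nhds hs)
    -- derivative of g at positive points
    have hgd : ∀ s : ℝ, 0 < s → HasDerivAt g ((L s)⁻¹ * L' s) s := fun s hs =>
      (Real.hasDerivAt_log (hLpos s hs.le).ne').comp s (hLd s hs)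
    -- H has zero derivative at positive points
    have hHd : ∀ s : ℝ, 0 < s → HasDerivAt H 0 s := by
      intro s hs
      have hd := (hgd s hs).div (hlder s hs.le) (hlogne s hs)
      have key : ((L s)⁻¹ * L' s * l s - g s * (1 + s)⁻¹) / l s ^ 2 = 0 := by
        rw [hode s hs]
        have hLne : L s ≠ 0 := (hLpos s hs.le).ne'
        have h1ne : (1:ℝ) + s ≠ 0 := (h1s s hs).ne'
        have hlne : l s ≠ 0 := hlogne s hs
        field_simp
        simp [hl_def, hg_def, hlogne s hs]
      rwa [key] at hd
    -- H is constant on (0,∞)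
    have hconst : ∀ a b : ℝ, 0 < a → a ≤ b → H b = H a := by
      intro a b ha hab
      have hc : ContinuousOn H (Set.Icc a b) := fun x hx =>
        ((hHd x (lt_of_lt_of_le ha hx.1)).continuousAt).continuousWithinAt
      have hd : ∀ x ∈ Set.Ico a b, HasDerivWithinAt H 0 (Set.Ici x) x := fun x hx =>
        (hHd x (lt_of_lt_of_le ha hx.1)).hasDerivWithinAt
      exact constant_of_has_deriv_right_zero hc hd b ⟨hab, le_rfl⟩
    -- limit of g t / t as t → 0⁺ is -α
    have hg0 : g 0 = 0 := by simp [hg_def, hL0]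
    have hgd0 : HasDerivWithinAt g (-α) (Set.Ici 0) 0 := by
      have hlog1 : HasDerivAt Real.log 1 (L 0) := by
        rw [hL0]; simpa using Real.hasDerivAt_log one_ne_zero
      have := hlog1.comp_hasDerivWithinAt 0 (hderiv 0 Set.self_mem_Ici)
      simpa [hL'0, Function.comp_def] using this
    have hA : Filter.Tendsto (fun t => g t / t) (nhdsWithin 0 (Set.Ioi 0)) (nhds (-α)) := by
      have := hasDerivWithinAt_iff_tendsto_slope.mp hgd0
      rw [Set.Ici_sdiff_left] at this
      refine this.congr' ?_
      filter_upwards [self_mem_nhdsWithin] with t ht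
      simp [slope_def_field, hg0, div_eq_iff (ne_of_gt (Set.mem_Ioi.mp ht))]
    have hB : Filter.Tendsto (fun t => l t / t) (nhdsWithin 0 (Set.Ioi 0)) (nhds 1) := by
      have hld0 : HasDerivWithinAt l 1 (Set.Ici 0) 0 := by
        have := (hlder 0 le_rfl).hasDerivWithinAt (s := Set.Ici 0)
        simpa using this
      have := hasDerivWithinAt_iff_tendsto_slope.mp hld0
      rw [Set.Ici_sdiff_left] at this
      refine this.congr' ?_
      filter_upwards [self_mem_nhdsWithin] with t ht
      have hl0 : l 0 = 0 := by simp [hl_def]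
      simp [slope_def_field, hl0, div_eq_iff (ne_of_gt (Set.mem_Ioi.mp ht))]
    have hHlim : Filter.Tendsto H (nhdsWithin 0 (Set.Ioi 0)) (nhds (-α)) := by
      have := hA.div hB one_ne_zero
      rw [div_one] at this
      refine this.congr' ?_
      filter_upwards [self_mem_nhdsWithin] with t ht
      have htne : (t:ℝ) ≠ 0 := ne_of_gt (Set.mem_Ioi.mp ht)
      simp only [Pi.div_apply, hH_def, div_div_div_cancel_right₀ htne]
    -- for each s > 0, H is eventually equal to the constant H s near 0⁺
    have hHval : ∀ s : ℝ, 0 < s → H s = -α := by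
      intro s hs
      have hev : H =ᶠ[nhdsWithin 0 (Set.Ioi 0)] (fun _ => H s) := by
        filter_upwards [Ioo_mem_nhdsGT_of_mem (Set.left_mem_Ico.mpr hs)] with t ht
        exact ((hconst t s ht.1 ht.2.le)).symm ▸ (hconst t s ht.1 ht.2.le).symm
      have h2 : Filter.Tendsto H (nhdsWithin 0 (Set.Ioi 0)) (nhds (H s)) :=
        Filter.Tendsto.congr' hev.symm tendsto_const_nhds
      exact tendsto_nhds_unique h2 hHlim
    intro s hs
    rcases eq_or_lt_of_le hs with rfl | hs'
    · simp [hL0, Real.one_rpow]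
    · have hH : g s / l s = -α := hHval s hs'
      have hls : g s = -α * l s := by
        rw [div_eq_iff (hlogne s hs')] at hH
        linarith [hH]
      have : L s = Real.exp (-α * Real.log (1 + s)) := by
        rw [← hls]
        exact (Real.exp_log (hLpos s hs)).symm
      rw [this, Real.rpow_def_of_pos (h1s s hs')]
      ring_nf
  · -- backward direction
    intro heq s hs
    have h1 : (0:ℝ) < 1 + s := h1s s hs
    have hr : HasDerivAt (fun x : ℝ => x ^ (-α)) (-α * (1 + s) ^ (-α - 1)) (1 + s) :=
      Real.hasDerivAt_rpow_const (Or.inl h1.ne')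
    have hd : HasDerivAt (fun t : ℝ => (1 + t) ^ (-α)) (-α * (1 + s) ^ (-α - 1)) s := by
      simpa [Function.comp_def] using hr.comp s (hbase s)
    have hEq : L =ᶠ[nhds s] (fun t : ℝ => (1 + t) ^ (-α)) := by
      filter_upwards [Ici_mem_nhds hs] with t ht
      exact heq t ht
    have hLd : HasDerivAt L (-α * (1 + s) ^ (-α - 1)) s := hd.congr_of_eventuallyEq hEq
    have hLd' : HasDerivAt L (L' s) s := (hderiv s hs.le).hasDerivAt (Ici_mem_nhds hs)
    have hL's : L' s = -α * (1 + s) ^ (-α - 1) := hLd'.unique hLd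
    rw [hL's, heq s hs.le, Real.log_rpow h1]
    have hsub : (1 + s) ^ (-α - 1) = (1 + s) ^ (-α) / (1 + s) := by
      rw [Real.rpow_sub h1, Real.rpow_one]
    rw [hsub]
    have hlne : Real.log (1 + s) ≠ 0 := hlogne s hs
    field_simp
end
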